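/- Let v₁, …, vₙ (n ≥ 2) be i.i.d. nonnegative random variables with common atomless distribution F, finite positive expectation of the maximum, let v = vₙ, Y = max(v₁, …, vₙ₋₁), Mₖ the maximum of k i.i.d. draws from F, and define the competition factor γ(F,n) = n·(E[Mₙ₋₁]/E[Mₙ] − (n−1)/n). Then the ratio of a bidder's expected second-price payment to his expected earned value under symmetric linear bidding equals γ(F,n): E[Y·1{v > Y}] / E[v·1{v > Y}] = γ(F,n). Consequently, when all n bidders with CPA target T > 0 use the bid b*(v) = (T/γ(F,n))·v, each bidder's CPA constraint E[payment] ≤ T·E[earned value] binds with equality. -/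

import Mathlib

/-!
Call a bidder's earned value `v·1{v > Y}` and his second-price payment `Y·1{v > Y}`, where `Y`
is the highest competing value. Since `Y·1{v > Y} = Y + v·1{v > Y} − max(v, Y)`, the expected
payment is `E[Mₙ₋₁] + A − E[Mₙ]` with `A` the expected earned value. Values are a.s. distinct, so
exactly the top bidder earns and the earned values of all `n` bidders add up to `Mₙ`; by
exchangeability they have the same expectation, so `A = E[Mₙ]/n`, and the payment-to-value ratio
is `n·(E[Mₙ₋₁]/E[Mₙ] − (n−1)/n) = γ`. The same symmetry argument shows that the expected payment,
hence `γ`, is positive: with positive probability two values are positive, and then the winner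
pays a positive price.
-/

open MeasureTheory ProbabilityTheory Set

section Probability

variable {Ω : Type*} [MeasurableSpace Ω] {μ : Measure Ω}

lemma ProbabilityTheory.IndepFun.measure_eq_eq_zero {β : Type*} [MeasurableSpace β]
    [MeasurableEq β] [IsFiniteMeasure μ] {X Y : Ω → β} (hXY : IndepFun X Y μ)
    (hX : Measurable X) (hY : Measurable Y) (hatom : ∀ y, μ {ω | Y ω = y} = 0) :
    μ {ω | X ω = Y ω} = 0 := by
  have hdiag : MeasurableSet {p : β × β | p.1 = p.2} := measurableSet_diagonal
  have hsection : ∀ x, μ.map Y (Prod.mk x ⁻¹' {p | p.1 = p.2}) = 0 := fun x => by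
    have hpre : Y ⁻¹' (Prod.mk x ⁻¹' {p | p.1 = p.2}) = {ω | Y ω = x} := by
      ext ω
      exact eq_comm
    rw [Measure.map_apply hY (measurable_prodMk_left hdiag), hpre, hatom x]
  change μ ((fun ω => (X ω, Y ω)) ⁻¹' {p | p.1 = p.2}) = 0
  rw [← Measure.map_apply (hX.prodMk hY) hdiag,
    hXY.map_prod_eq_prod_map_map hX.aemeasurable hY.aemeasurable, Measure.prod_apply hdiag]
  simp only [hsection, lintegral_zero]

lemma ProbabilityTheory.iIndepFun.ae_injective {ι β : Type*} [Countable ι] [MeasurableSpace β]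
    [MeasurableEq β] [IsProbabilityMeasure μ] {v : ι → Ω → β} (hindep : iIndepFun v μ)
    (hmeas : ∀ i, Measurable (v i)) (hatom : ∀ i y, μ {ω | v i ω = y} = 0) :
    ∀ᵐ ω ∂μ, Function.Injective fun i => v i ω := by
  have hpair : ∀ᵐ ω ∂μ, ∀ i j, i ≠ j → v i ω ≠ v j ω := by
    refine ae_all_iff.mpr fun i => ae_all_iff.mpr fun j => ?_
    by_cases hij : i = j
    · exact ae_of_all _ fun _ hne => absurd hij hne
    · have hnull := (hindep.indepFun hij).measure_eq_eq_zero (hmeas i) (hmeas j) (hatom j)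
      filter_upwards [(ae_iff (p := fun ω => v i ω ≠ v j ω)).mpr
        (by simpa only [not_not] using hnull)] with ω hω _ using hω
  filter_upwards [hpair] with ω hω i j hv
  by_contra hij
  exact hω i j hij hv

lemma ProbabilityTheory.IndepFun.measure_pos_and_pos [IsFiniteMeasure μ] {X Y : Ω → ℝ}
    (hXY : IndepFun X Y μ) (hid : IdentDistrib X Y μ μ) (hY : 0 ≤ Y) (hYint : Integrable Y μ)
    (hpos : 0 < ∫ ω, Y ω ∂μ) : 0 < μ {ω | 0 < X ω ∧ 0 < Y ω} := by
  have hYpos : 0 < μ (Y ⁻¹' Ioi 0) := by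
    rw [integral_pos_iff_support_of_nonneg hY hYint] at hpos
    convert hpos using 2
    ext ω
    exact (hY ω).lt_iff_ne'
  change 0 < μ (X ⁻¹' Ioi 0 ∩ Y ⁻¹' Ioi 0)
  rw [hXY.measure_inter_preimage_eq_mul _ _ measurableSet_Ioi measurableSet_Ioi,
    hid.measure_mem_eq measurableSet_Ioi]
  exact ENNReal.mul_pos hYpos.ne' hYpos.ne'

variable {ι : Type*} [Fintype ι] {v : ι → Ω → ℝ}

lemma integrable_comp_of_abs_le_sum_abs (hmeas : ∀ i, Measurable (v i))
    (hint : ∀ i, Integrable (v i) μ) {g : (ι → ℝ) → ℝ} (hg : Measurable g)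
    (hbound : ∀ x, |g x| ≤ ∑ j, |x j|) : Integrable (fun ω => g fun j => v j ω) μ :=
  (integrable_finsetSum _ fun j _ => (hint j).abs).mono'
    (hg.comp (measurable_pi_lambda _ hmeas)).aestronglyMeasurable
    (ae_of_all _ fun ω => by simpa only [Real.norm_eq_abs] using hbound _)

lemma ProbabilityTheory.iIndepFun.integral_comp_perm (hindep : iIndepFun v μ)
    (hid : ∀ i j, IdentDistrib (v i) (v j) μ μ) (e : Equiv.Perm ι) {f : (ι → ℝ) → ℝ}
    (hf : Measurable f) :
    ∫ ω, f (fun j => v (e j) ω) ∂μ = ∫ ω, f (fun j => v j ω) ∂μ :=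
  ((IdentDistrib.pi (fun i => hid (e i) i) (hindep.precomp e.injective) hindep).comp hf).integral_eq

lemma ProbabilityTheory.iIndepFun.integral_sum_eq_card_mul [DecidableEq ι]
    (hindep : iIndepFun v μ) (hid : ∀ i j, IdentDistrib (v i) (v j) μ μ)
    {f : ι → (ι → ℝ) → ℝ} (hf : ∀ i, Measurable (f i))
    (hperm : ∀ (e : Equiv.Perm ι) i x, f i (x ∘ e) = f (e i) x)
    (hfint : ∀ i, Integrable (fun ω => f i fun j => v j ω) μ) (k : ι) :
    ∫ ω, ∑ i, f i (fun j => v j ω) ∂μ = Fintype.card ι * ∫ ω, f k (fun j => v j ω) ∂μ := by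
  have hsame : ∀ i, ∫ ω, f i (fun j => v j ω) ∂μ = ∫ ω, f k (fun j => v j ω) ∂μ := fun i => by
    rw [← hindep.integral_comp_perm hid (Equiv.swap k i) (hf k)]
    congr with ω
    rw [← Equiv.swap_apply_left k i, ← hperm, Equiv.swap_apply_left]
    rfl
  rw [integral_finsetSum _ fun i _ => hfint i, Finset.sum_congr rfl fun i _ => hsame i,
    Finset.sum_const, Finset.card_univ, nsmul_eq_mul]

end Probability

namespace Finset

variable {ι : Type*}

lemma measurable_fold_max (s : Finset ι) : Measurable fun x : ι → ℝ => s.fold max 0 x := by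
  classical
  induction s using Finset.induction_on with
  | empty => exact measurable_const
  | insert j s hj ih =>
    simp only [fold_insert hj]
    exact (measurable_pi_apply j).max ih

lemma abs_fold_max_le_sum_abs [Fintype ι] (s : Finset ι) (x : ι → ℝ) :
    |s.fold max 0 x| ≤ ∑ j, |x j| := by
  rw [abs_of_nonneg ((le_fold_max _).mpr (Or.inl le_rfl))]
  exact (fold_max_le _).mpr ⟨by positivity, fun j _ =>
    (le_abs_self (x j)).trans (single_le_sum (fun k _ => abs_nonneg (x k)) (mem_univ j))⟩

end Finset

namespace SecondPrice

open Finset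

variable {ι : Type*} [Fintype ι] [DecidableEq ι]

noncomputable def maxOthers (i : ι) (x : ι → ℝ) : ℝ := (univ.erase i).fold max 0 x

noncomputable def earnedValue (i : ι) (x : ι → ℝ) : ℝ :=
  if maxOthers i x < x i then x i else 0

noncomputable def payment (i : ι) (x : ι → ℝ) : ℝ :=
  if maxOthers i x < x i then maxOthers i x else 0

lemma maxOthers_nonneg (i : ι) (x : ι → ℝ) : 0 ≤ maxOthers i x :=
  le_fold_max _ |>.mpr (Or.inl le_rfl)

lemma le_maxOthers {i j : ι} (hji : j ≠ i) (x : ι → ℝ) : x j ≤ maxOthers i x :=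
  le_fold_max _ |>.mpr (Or.inr ⟨j, mem_erase.mpr ⟨hji, mem_univ j⟩, le_rfl⟩)

lemma payment_nonneg (i : ι) (x : ι → ℝ) : 0 ≤ payment i x := by
  unfold payment
  split_ifs
  exacts [maxOthers_nonneg i x, le_rfl]

lemma fold_max_univ_eq_max_maxOthers (i : ι) (x : ι → ℝ) :
    univ.fold max 0 x = max (x i) (maxOthers i x) := by
  rw [← insert_erase (mem_univ i), fold_insert (notMem_erase i univ), maxOthers]

lemma maxOthers_comp_perm (e : Equiv.Perm ι) (i : ι) (x : ι → ℝ) :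
    maxOthers i (x ∘ e) = maxOthers (e i) x := by
  have himage : (univ.erase i).map e.toEmbedding = univ.erase (e i) := by
    rw [map_erase, map_univ_equiv]
    rfl
  rw [maxOthers, maxOthers, ← himage, fold_map]
  rfl

lemma earnedValue_comp_perm (e : Equiv.Perm ι) (i : ι) (x : ι → ℝ) :
    earnedValue i (x ∘ e) = earnedValue (e i) x := by
  simp only [earnedValue, maxOthers_comp_perm, Function.comp_apply]

lemma payment_comp_perm (e : Equiv.Perm ι) (i : ι) (x : ι → ℝ) :
    payment i (x ∘ e) = payment (e i) x := by
  simp only [payment, maxOthers_comp_perm, Function.comp_apply]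

lemma earnedValue_le {i : ι} {x : ι → ℝ} (hx : 0 ≤ x i) : earnedValue i x ≤ x i := by
  unfold earnedValue
  split_ifs
  exacts [le_rfl, hx]

lemma maxOthers_lt_of_isMax {x : ι → ℝ} (hx : Function.Injective x) {i : ι}
    (hmax : ∀ j, x j ≤ x i) (hpos : 0 < x i) : maxOthers i x < x i :=
  (fold_max_lt _).mpr ⟨hpos, fun j hj => (hmax j).lt_of_ne (hx.ne (mem_erase.mp hj).1)⟩

lemma sum_earnedValue_eq_fold_max {x : ι → ℝ} (hx : Function.Injective x) :
    ∑ i, earnedValue i x = univ.fold max 0 x := by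
  rcases isEmpty_or_nonempty ι with hι | ⟨⟨k⟩⟩
  · simp [Finset.univ_eq_empty]
  obtain ⟨i₀, -, hmax⟩ := exists_max_image univ x ⟨k, mem_univ k⟩
  replace hmax : ∀ j, x j ≤ x i₀ := fun j => hmax j (mem_univ j)
  have hlose : ∀ i ≠ i₀, earnedValue i x = 0 := fun i hi =>
    if_neg ((hmax i).trans (le_maxOthers (Ne.symm hi) x)).not_gt
  rw [sum_eq_single i₀ (fun i _ hi => hlose i hi) (absurd (mem_univ i₀)),
    fold_max_univ_eq_max_maxOthers i₀]
  rcases lt_or_ge 0 (x i₀) with hpos | hnonpos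
  · have hwin := maxOthers_lt_of_isMax hx hmax hpos
    rw [earnedValue, if_pos hwin, max_eq_left hwin.le]
  · have hzero : maxOthers i₀ x = 0 := le_antisymm
      ((fold_max_le _).mpr ⟨le_rfl, fun j _ => (hmax j).trans hnonpos⟩) (maxOthers_nonneg i₀ x)
    rw [earnedValue, hzero, if_neg hnonpos.not_gt, max_eq_right hnonpos]

lemma payment_eq (i : ι) (x : ι → ℝ) :
    payment i x = maxOthers i x + earnedValue i x - univ.fold max 0 x := by
  rw [fold_max_univ_eq_max_maxOthers i, payment, earnedValue]
  split_ifs with h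
  · rw [max_eq_left h.le]; ring
  · rw [max_eq_right (not_lt.mp h)]; ring

lemma sum_payment_pos {x : ι → ℝ} (hx : Function.Injective x) {a b : ι} (hab : a ≠ b)
    (ha : 0 < x a) (hb : 0 < x b) : 0 < ∑ i, payment i x := by
  obtain ⟨i₀, -, hmax⟩ := exists_max_image univ x ⟨a, mem_univ a⟩
  replace hmax : ∀ j, x j ≤ x i₀ := fun j => hmax j (mem_univ j)
  have hwin := maxOthers_lt_of_isMax hx hmax (ha.trans_le (hmax a))
  have hpay : 0 < payment i₀ x := by
    rw [payment, if_pos hwin]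
    obtain ⟨c, hc, hci₀⟩ : ∃ c, 0 < x c ∧ c ≠ i₀ := by
      by_cases hai₀ : a = i₀
      exacts [⟨b, hb, hai₀ ▸ hab.symm⟩, ⟨a, ha, hai₀⟩]
    exact hc.trans_le (le_maxOthers hci₀ x)
  exact hpay.trans_le
    (single_le_sum (fun i _ => payment_nonneg i x) (mem_univ i₀))

lemma abs_earnedValue_le_sum_abs (i : ι) (x : ι → ℝ) : |earnedValue i x| ≤ ∑ j, |x j| := by
  unfold earnedValue
  split_ifs
  · exact single_le_sum (fun k _ => abs_nonneg (x k)) (mem_univ i)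
  · simp only [abs_zero]; positivity

lemma abs_payment_le_sum_abs (i : ι) (x : ι → ℝ) : |payment i x| ≤ ∑ j, |x j| := by
  unfold payment
  split_ifs
  · exact abs_fold_max_le_sum_abs _ x
  · simp only [abs_zero]; positivity

lemma measurable_maxOthers (i : ι) : Measurable (maxOthers i) := measurable_fold_max _

lemma measurable_earnedValue (i : ι) : Measurable (earnedValue i) :=
  Measurable.ite (measurableSet_lt (measurable_maxOthers i) (measurable_pi_apply i))
    (measurable_pi_apply i) measurable_const

lemma measurable_payment (i : ι) : Measurable (payment i) :=
  Measurable.ite (measurableSet_lt (measurable_maxOthers i) (measurable_pi_apply i))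
    (measurable_maxOthers i) measurable_const

section Expectations

variable {Ω : Type*} [MeasurableSpace Ω] {μ : Measure Ω} {v : ι → Ω → ℝ}

lemma integral_payment_eq (hmeas : ∀ i, Measurable (v i)) (hint : ∀ i, Integrable (v i) μ)
    (k : ι) :
    ∫ ω, payment k (fun j => v j ω) ∂μ = (∫ ω, maxOthers k (fun j => v j ω) ∂μ)
      + (∫ ω, earnedValue k (fun j => v j ω) ∂μ) - ∫ ω, univ.fold max 0 (fun j => v j ω) ∂μ := by
  have hmaxOthers := integrable_comp_of_abs_le_sum_abs hmeas hint (measurable_maxOthers k)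
    (abs_fold_max_le_sum_abs _)
  have hvalue := integrable_comp_of_abs_le_sum_abs hmeas hint (measurable_earnedValue k)
    (abs_earnedValue_le_sum_abs k)
  have hmax := integrable_comp_of_abs_le_sum_abs hmeas hint (measurable_fold_max univ)
    (abs_fold_max_le_sum_abs univ)
  simp only [payment_eq]
  rw [integral_sub ?_ hmax, integral_add hmaxOthers hvalue]
  exact hmaxOthers.add hvalue

variable [IsProbabilityMeasure μ] (hmeas : ∀ i, Measurable (v i))
  (hint : ∀ i, Integrable (v i) μ) (hindep : iIndepFun v μ)
  (hid : ∀ i j, IdentDistrib (v i) (v j) μ μ) (hatom : ∀ i y, μ {ω | v i ω = y} = 0)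
include hmeas hint hindep hid hatom

lemma integral_fold_max_eq_card_mul (k : ι) :
    ∫ ω, univ.fold max 0 (fun j => v j ω) ∂μ
      = Fintype.card ι * ∫ ω, earnedValue k (fun j => v j ω) ∂μ := by
  rw [← hindep.integral_sum_eq_card_mul hid measurable_earnedValue earnedValue_comp_perm
    (fun i => integrable_comp_of_abs_le_sum_abs hmeas hint (measurable_earnedValue i)
      (abs_earnedValue_le_sum_abs i)) k]
  exact integral_congr_ae ((hindep.ae_injective hmeas hatom).mono fun ω hω =>
    (sum_earnedValue_eq_fold_max hω).symm)

lemma integral_payment_pos (hnn : ∀ i ω, 0 ≤ v i ω) {a k : ι} (hak : a ≠ k)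
    (hvalue : 0 < ∫ ω, earnedValue k (fun j => v j ω) ∂μ) :
    0 < ∫ ω, payment k (fun j => v j ω) ∂μ := by
  have hpay_int i := integrable_comp_of_abs_le_sum_abs hmeas hint (measurable_payment i)
    (abs_payment_le_sum_abs i)
  have hvalue_int := integrable_comp_of_abs_le_sum_abs hmeas hint (measurable_earnedValue k)
    (abs_earnedValue_le_sum_abs k)
  have hk : 0 < ∫ ω, v k ω ∂μ := hvalue.trans_le
    (integral_mono hvalue_int (hint k) fun ω => earnedValue_le (hnn k ω))
  have hboth := (hindep.indepFun hak).measure_pos_and_pos (hid a k) (hnn k) (hint k) hk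
  have hsum : 0 < ∫ ω, ∑ i, payment i (fun j => v j ω) ∂μ := by
    refine (integral_pos_iff_support_of_nonneg
      (fun ω => sum_nonneg fun i _ => payment_nonneg i _)
      (integrable_finsetSum _ fun i _ => hpay_int i)).mpr (hboth.trans_le (measure_mono_ae ?_))
    filter_upwards [hindep.ae_injective hmeas hatom] with ω hω hvak
    exact (sum_payment_pos hω hak hvak.1 hvak.2).ne'
  rw [hindep.integral_sum_eq_card_mul hid measurable_payment payment_comp_perm hpay_int k] at hsum
  exact pos_of_mul_pos_right hsum (by positivity)

end Expectations

end SecondPrice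

open SecondPrice in
theorem competition_factor_and_binding_cpa_general
    {Ω : Type*} [MeasureSpace Ω] [IsProbabilityMeasure (ℙ : Measure Ω)]
    (m : ℕ) (hm : 1 ≤ m)
    (v : Fin (m + 1) → Ω → ℝ)
    (hmeas : ∀ i, Measurable (v i))
    (hnn : ∀ i ω, 0 ≤ v i ω)
    (hindep : iIndepFun v ℙ)
    (hid : ∀ i j, IdentDistrib (v i) (v j) ℙ ℙ)
    (hatomless : ∀ i (x : ℝ), ℙ {ω | v i ω = x} = 0)
    (hint : ∀ i, Integrable (v i) ℙ)
    (Y M : Ω → ℝ)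
    (hY : ∀ ω, Y ω = (Finset.univ.erase (Fin.last m)).fold max 0 (fun i => v i ω))
    (hM : ∀ ω, M ω = Finset.univ.fold max 0 (fun i => v i ω))
    (hMpos : 0 < ∫ ω, M ω ∂ℙ)
    (T : ℝ)
    (γ : ℝ)
    (hγ : γ = ((m : ℝ) + 1) * ((∫ ω, Y ω ∂ℙ) / (∫ ω, M ω ∂ℙ) - (m : ℝ) / (m + 1))) :
    (∫ ω, (if Y ω < v (Fin.last m) ω then Y ω else 0) ∂ℙ)
        / (∫ ω, (if Y ω < v (Fin.last m) ω then v (Fin.last m) ω else 0) ∂ℙ) = γ ∧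
    (∫ ω, (if Y ω < v (Fin.last m) ω then (T / γ) * Y ω else 0) ∂ℙ)
        = T * ∫ ω, (if Y ω < v (Fin.last m) ω then v (Fin.last m) ω else 0) ∂ℙ := by
  set last := Fin.last m
  obtain rfl : Y = fun ω => maxOthers last fun i => v i ω := funext hY
  obtain rfl : M = fun ω => Finset.univ.fold max 0 fun i => v i ω := funext hM
  have hMA := integral_fold_max_eq_card_mul hmeas hint hindep hid hatomless last
  have hB := integral_payment_eq hmeas hint last
  set A := ∫ ω, earnedValue last (fun i => v i ω)
  set B := ∫ ω, payment last (fun i => v i ω)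
  rw [Fintype.card_fin, Nat.cast_add, Nat.cast_one] at hMA
  have hApos : 0 < A := pos_of_mul_pos_right (hMA ▸ hMpos) (by positivity)
  have hcompetitor : (0 : Fin (m + 1)) ≠ last := by
    rw [Ne, Fin.ext_iff, Fin.val_zero, Fin.val_last]
    omega
  have hBpos : 0 < B :=
    integral_payment_pos hmeas hint hindep hid hatomless hnn hcompetitor hApos
  have hBγ : B = γ * A := by
    rw [hB, hγ, hMA]
    field_simp
    ring
  have hγ0 : γ ≠ 0 := by
    rintro rfl
    exact hBpos.ne' (hBγ.trans (zero_mul A))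
  constructor
  · change B / A = γ
    rw [hBγ, mul_div_cancel_right₀ γ hApos.ne']
  · calc _ = T / γ * B := by simp only [B, ← integral_const_mul, payment, mul_ite, mul_zero]
      _ = T * A := by rw [hBγ]; field_simp

/-- **The competition factor is the equilibrium cost/value ratio, and the
equilibrium bid `b⋆(v) = (T/γ)·v` makes the CPA constraint bind.**
For `n = m + 1 ≥ 2` i.i.d. nonnegative values with an atomless common
distribution and finite positive expected maximum, let `v` be the last value,
`Y` the maximum of the other `n − 1` values (`E[Y] = E[Mₙ₋₁]`), `M` the maximum
of all `n` values (`E[M] = E[Mₙ]`) and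
`γ = n·(E[Mₙ₋₁]/E[Mₙ] − (n−1)/n)` the competition factor.  Under symmetric
linear bidding a bidder wins iff `v > Y` and then pays the multiplier times
`Y`; the ratio of expected payment to expected earned value equals `γ`, and
with the bid `b⋆(v) = (T/γ)·v` the CPA constraint binds with equality. -/
theorem competition_factor_and_binding_cpa
    {Ω : Type*} [MeasureSpace Ω] [IsProbabilityMeasure (ℙ : Measure Ω)]
    (m : ℕ) (hm : 1 ≤ m)
    (v : Fin (m + 1) → Ω → ℝ)
    (hmeas : ∀ i, Measurable (v i))
    (hnn : ∀ i ω, 0 ≤ v i ω)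
    (hindep : iIndepFun v ℙ)
    (hid : ∀ i j, IdentDistrib (v i) (v j) ℙ ℙ)
    (hatomless : ∀ i (x : ℝ), ℙ {ω | v i ω = x} = 0)
    (hint : ∀ i, Integrable (v i) ℙ)
    (Y M : Ω → ℝ)
    (hY : ∀ ω, Y ω = (Finset.univ.erase (Fin.last m)).fold max 0 (fun i => v i ω))
    (hM : ∀ ω, M ω = Finset.univ.fold max 0 (fun i => v i ω))
    (hMpos : 0 < ∫ ω, M ω ∂ℙ)
    (T : ℝ) (hT : 0 < T)
    (γ : ℝ)
    (hγ : γ = ((m : ℝ) + 1) * ((∫ ω, Y ω ∂ℙ) / (∫ ω, M ω ∂ℙ) - (m : ℝ) / (m + 1))) :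
    (∫ ω, (if Y ω < v (Fin.last m) ω then Y ω else 0) ∂ℙ)
        / (∫ ω, (if Y ω < v (Fin.last m) ω then v (Fin.last m) ω else 0) ∂ℙ) = γ ∧
    (∫ ω, (if Y ω < v (Fin.last m) ω then (T / γ) * Y ω else 0) ∂ℙ)
        = T * ∫ ω, (if Y ω < v (Fin.last m) ω then v (Fin.last m) ω else 0) ∂ℙ :=
  competition_factor_and_binding_cpa_general m hm v hmeas hnn hindep hid hatomless hint Y M hY hM
    hMpos T γ hγ
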